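/- arXiv:2207.08595 — 2 statements merged into one kernel-verified Lean document; each statement's English description precedes it below -/
import Mathlib

section
/- A topological space X is star-Scheepers if and only if X satisfies SU_fin(O, O^wgp), i.e., for every sequence (U_n) of open covers there exist finite V_n ⊆ U_n such that {St(⋃V_n, U_n) : n ∈ ℕ} is a weakly groupable open cover of X. -/
open Set

/-- The dominating number 𝔡: least cardinality of a dominating family in ℕ^ℕ. -/
noncomputable def dominatingNumber : Cardinal :=
  sInf { c | ∃ D : Set (ℕ → ℕ),
    (∀ g : ℕ → ℕ, ∃ f ∈ D, ∀ᶠ n in Filter.atTop, g n ≤ f n) ∧ c = Cardinal.mk D }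

/-- `U` is an open cover of the space `X`. -/
def IsOpenCover {X : Type*} [TopologicalSpace X] (U : Set (Set X)) : Prop :=
  (∀ u ∈ U, IsOpen u) ∧ ⋃₀ U = Set.univ

/-- The star of a set `A` with respect to a family `U`. -/
def starOf {X : Type*} (A : Set X) (U : Set (Set X)) : Set X :=
  ⋃₀ {B | B ∈ U ∧ (A ∩ B).Nonempty}

/-- The star-Scheepers property (ω-cover form). -/
def StarScheepers (X : Type*) [TopologicalSpace X] : Prop :=
  ∀ U : ℕ → Set (Set X), (∀ n, IsOpenCover (U n)) →
    ∃ V : ℕ → Set (Set X), (∀ n, V n ⊆ U n ∧ (V n).Finite) ∧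
      ∀ F : Set X, F.Finite → ∃ n, F ⊆ starOf (⋃₀ V n) (U n)

/-- The strongly star-Scheepers property. -/
def StronglyStarScheepers (X : Type*) [TopologicalSpace X] : Prop :=
  ∀ U : ℕ → Set (Set X), (∀ n, IsOpenCover (U n)) →
    ∃ F : ℕ → Set X, (∀ n, (F n).Finite) ∧
      ∀ G : Set X, G.Finite → ∃ n, G ⊆ starOf (F n) (U n)

/-- A family `W` is a weakly groupable cover of the space. -/
def WeaklyGroupable {X : Type*} (W : Set (Set X)) : Prop :=
  ∃ P : ℕ → Set (Set X), (∀ n, (P n).Finite) ∧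
    (∀ m n, m ≠ n → Disjoint (P m) (P n)) ∧ (⋃ n, P n) = W ∧
    ∀ F : Set X, F.Finite → ∃ n, F ⊆ ⋃₀ P n

lemma starOf_mono {X : Type*} {A A' : Set X} (h : A ⊆ A') (U : Set (Set X)) :
    starOf A U ⊆ starOf A' U := by
  rintro x ⟨B, ⟨hBU, y, hy1, hy2⟩, hxB⟩
  exact ⟨B, ⟨hBU, y, h hy1, hy2⟩, hxB⟩

lemma wg_of_omega {X : Type*} (f : ℕ → Set X)
    (h : ∀ F : Set X, F.Finite → ∃ n, F ⊆ f n) :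
    WeaklyGroupable (Set.range f) := by
  classical
  refine ⟨fun n => {f n} \ f '' Set.Iio n, fun n => (Set.finite_singleton _).diff,
    ?_, ?_, ?_⟩
  · intro m n hmn
    rw [Set.disjoint_left]
    rintro s ⟨hs1, hs2⟩ ⟨ht1, ht2⟩
    simp only [Set.mem_singleton_iff] at hs1 ht1
    subst hs1
    rcases lt_or_gt_of_ne hmn with h' | h'
    · exact ht2 ⟨m, h', rfl⟩
    · exact hs2 ⟨n, h', ht1.symm⟩
  · ext s
    simp only [Set.mem_iUnion, Set.mem_range]
    constructor
    · rintro ⟨n, hn, -⟩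
      exact ⟨n, hn.symm⟩
    · rintro ⟨n, rfl⟩
      have hex : ∃ m, f m = f n := ⟨n, rfl⟩
      refine ⟨Nat.find hex, (Nat.find_spec hex).symm, ?_⟩
      rintro ⟨j, hj, hjn⟩
      exact Nat.find_min hex hj hjn
  · intro F hF
    obtain ⟨n, hn⟩ := h F hF
    have hex : ∃ m, f m = f n := ⟨n, rfl⟩
    refine ⟨Nat.find hex, fun x hx => ?_⟩
    refine ⟨f (Nat.find hex), ⟨rfl, ?_⟩, by rw [Nat.find_spec hex]; exact hn hx⟩
    rintro ⟨j, hj, hjn⟩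
    exact Nat.find_min hex hj (hjn.trans (Nat.find_spec hex))

lemma backward_aux {X : Type*} [TopologicalSpace X]
    (H : ∀ U : ℕ → Set (Set X), (∀ n, IsOpenCover (U n)) →
      ∃ V : ℕ → Set (Set X), (∀ n, V n ⊆ U n ∧ (V n).Finite) ∧
        WeaklyGroupable (Set.range fun n => starOf (⋃₀ V n) (U n)))
    (U : ℕ → Set (Set X)) (hU : ∀ n, IsOpenCover (U n)) :
    ∃ V : ℕ → Set (Set X), (∀ n, V n ⊆ U n ∧ (V n).Finite) ∧
      ∀ F : Set X, F.Finite → ∃ n, F ⊆ starOf (⋃₀ V n) (U n) := by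
  classical
  set U' : ℕ → Set (Set X) := fun n =>
    { s | ∃ u : ℕ → Set X, (∀ i, u i ∈ U i) ∧ s = ⋂ i ∈ Finset.range (n+1), u i } with hU'def
  have hU'cov : ∀ n, IsOpenCover (U' n) := by
    intro n
    constructor
    · rintro s ⟨u, hu, rfl⟩
      exact isOpen_biInter_finset (fun i _ => (hU i).1 _ (hu i))
    · apply eq_univ_of_forall
      intro x
      have hx : ∀ i, ∃ t, t ∈ U i ∧ x ∈ t := by
        intro i
        have h2 := (hU i).2
        have hx' : x ∈ ⋃₀ U i := h2 ▸ mem_univ x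
        obtain ⟨t, ht, hxt⟩ := hx'
        exact ⟨t, ht, hxt⟩
      choose u hu hxu using hx
      exact ⟨⋂ i ∈ Finset.range (n+1), u i, ⟨u, hu, rfl⟩, by simp [hxu]⟩
  obtain ⟨V', hV', P, hPfin, hPdisj, hPun, hPcov⟩ := H U' hU'cov
  set g : ℕ → Set X := fun n => starOf (⋃₀ V' n) (U' n) with hgdef
  have hw : ∀ n, ∀ s ∈ U' n, ∃ u : ℕ → Set X,
      (∀ i, u i ∈ U i) ∧ s = ⋂ i ∈ Finset.range (n+1), u i := fun n s hs => hs
  choose! u hu1 hu2 using hw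
  set I : ℕ → Set ℕ := fun k => {n | g n ∈ P k ∧ ∀ j < n, g j ≠ g n} with hIdef
  have hIfin : ∀ k, (I k).Finite := by
    intro k
    have himg : (g '' I k).Finite := (hPfin k).subset (by rintro _ ⟨n, hn, rfl⟩; exact hn.1)
    refine Set.Finite.of_finite_image himg ?_
    intro a ha b hb hab
    rcases lt_trichotomy a b with h | h | h
    · exact absurd hab (hb.2 a h)
    · exact h
    · exact absurd hab.symm (ha.2 b h)
  have hmem : ∀ k, ∀ s ∈ P k, ∃ n ∈ I k, g n = s := by
    intro k s hs
    have hsr : s ∈ Set.range g := by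
      rw [← hPun]; exact Set.mem_iUnion.mpr ⟨k, hs⟩
    obtain ⟨n0, hn0⟩ := hsr
    have hex : ∃ n, g n = s := ⟨n0, hn0⟩
    refine ⟨Nat.find hex, ⟨by rw [Nat.find_spec hex]; exact hs, ?_⟩, Nat.find_spec hex⟩
    intro j hj hje
    exact Nat.find_min hex hj (hje.trans (Nat.find_spec hex))
  have hk : ∀ m, ∃ k, (∃ k', (I k').Nonempty ∧ sInf (I k') = m) →
      ((I k).Nonempty ∧ sInf (I k) = m) := by
    intro m
    by_cases h : ∃ k', (I k').Nonempty ∧ sInf (I k') = m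
    · exact ⟨h.choose, fun _ => h.choose_spec⟩
    · exact ⟨0, fun h' => absurd h' h⟩
  choose kk hkk using hk
  set V : ℕ → Set (Set X) := fun m => ⋃ n ∈ I (kk m), (fun s => u n s m) '' V' n with hVdef
  refine ⟨V, ?_, ?_⟩
  · intro m
    constructor
    · rintro t ht
      simp only [hVdef, Set.mem_iUnion] at ht
      obtain ⟨n, hn, s, hs, rfl⟩ := ht
      exact hu1 n s ((hV' n).1 hs) m
    · exact Set.Finite.biUnion (hIfin _) (fun n _ => ((hV' n).2.image _))
  · intro F hF
    rcases F.eq_empty_or_nonempty with rfl | ⟨x0, hx0⟩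
    · exact ⟨0, by simp⟩
    obtain ⟨k, hFk⟩ := hPcov F hF
    obtain ⟨s0, hs0, -⟩ := hFk hx0
    obtain ⟨n0, hn0, -⟩ := hmem k s0 hs0
    have hne : (I k).Nonempty := ⟨n0, hn0⟩
    set m := sInf (I k) with hmdef
    have hKm : ∃ k', (I k').Nonempty ∧ sInf (I k') = m := ⟨k, hne, rfl⟩
    obtain ⟨hne', hinf'⟩ := hkk m hKm
    have hke : kk m = k := by
      by_contra hcon
      have h1 := Nat.sInf_mem hne'
      rw [hinf'] at h1
      have h2 : m ∈ I k := Nat.sInf_mem hne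
      exact (Set.disjoint_left.mp (hPdisj _ _ hcon) h1.1) h2.1
    refine ⟨m, fun x hx => ?_⟩
    obtain ⟨s, hs, hxs⟩ := hFk hx
    obtain ⟨n, hnI, rfl⟩ := hmem k s hs
    have hmn : m ≤ n := Nat.sInf_le hnI
    obtain ⟨B, ⟨hBU, y, hyV, hyB⟩, hxB⟩ := hxs
    obtain ⟨s', hs'V, hys'⟩ := hyV
    have hs'U : s' ∈ U' n := (hV' n).1 hs'V
    have hBsub : B ⊆ u n B m := by
      intro z hz
      rw [hu2 n B hBU] at hz
      simp only [Set.mem_iInter] at hz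
      exact hz m (Finset.mem_range.mpr (Nat.lt_succ_of_le hmn))
    have hs'sub : s' ⊆ u n s' m := by
      intro z hz
      rw [hu2 n s' hs'U] at hz
      simp only [Set.mem_iInter] at hz
      exact hz m (Finset.mem_range.mpr (Nat.lt_succ_of_le hmn))
    have hmemV : u n s' m ∈ V m := by
      simp only [hVdef, Set.mem_iUnion]
      exact ⟨n, hke ▸ hnI, s', hs'V, rfl⟩
    exact ⟨u n B m, ⟨hu1 n B hBU m,
      ⟨y, ⟨u n s' m, hmemV, hs'sub hys'⟩, hBsub hyB⟩⟩, hBsub hxB⟩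

theorem stmt_6 {X : Type*} [TopologicalSpace X] :
    (∀ U : ℕ → Set (Set X), (∀ n, IsOpenCover (U n)) →
      ∃ V : ℕ → Set (Set X), (∀ n, V n ⊆ U n ∧ (V n).Finite) ∧
        ((∀ F : Set X, F.Finite → ∃ n, F ⊆ starOf (⋃₀ V n) (U n)) ∨
          ∃ n, starOf (⋃₀ V n) (U n) = Set.univ)) ↔
    (∀ U : ℕ → Set (Set X), (∀ n, IsOpenCover (U n)) →
      ∃ V : ℕ → Set (Set X), (∀ n, V n ⊆ U n ∧ (V n).Finite) ∧
        WeaklyGroupable (Set.range fun n => starOf (⋃₀ V n) (U n))) := by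
  constructor
  · intro H U hU
    obtain ⟨V, hV, hc⟩ := H U hU
    refine ⟨V, hV, wg_of_omega _ ?_⟩
    rcases hc with h | ⟨n₀, hn₀⟩
    · exact h
    · intro F hF
      exact ⟨n₀, by rw [hn₀]; exact Set.subset_univ F⟩
  · intro H U hU
    obtain ⟨V, hV, hc⟩ := backward_aux H U hU
    exact ⟨V, hV, Or.inl hc⟩
end

section
/- If AD(X) is strongly star-Scheepers, then X is strongly star-Scheepers. -/
open Set

/-- The topology of the Alexandroff duplicate AD(X) on X × Bool:
points (x, true) are isolated, and basic neighbourhoods of (x, false)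
are (U × {false,true}) \ {(x, true)} for U an open neighbourhood of x. -/
def ADTop (X : Type*) [TopologicalSpace X] : TopologicalSpace (X × Bool) :=
  TopologicalSpace.generateFrom
    ({S | ∃ x : X, S = {(x, true)}} ∪
     {S | ∃ (x : X) (U : Set X), IsOpen U ∧ x ∈ U ∧
        S = (U ×ˢ (Set.univ : Set Bool)) \ {(x, true)}})

/-!
Strong star-Scheepers passes to continuous surjective images: pull the covers back, apply the
property upstairs, and push the finite sets forward. The projection of `AD(X)` onto `X` is such
a map, since the preimage `U × {0,1}` of an open `U` is a union of isolated points `(x,1)` and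
basic neighbourhoods of the points `(x,0)`.
-/

theorem IsOpenCover.preimage {X Y : Type*} [TopologicalSpace X] [TopologicalSpace Y]
    {f : Y → X} (hf : Continuous f) {U : Set (Set X)} (hU : IsOpenCover U) :
    IsOpenCover (preimage f '' U) := by
  refine ⟨?_, ?_⟩
  · rintro _ ⟨u, hu, rfl⟩
    exact (hU.1 u hu).preimage hf
  · rw [sUnion_image, ← preimage_iUnion₂, ← sUnion_eq_biUnion, hU.2, preimage_univ]

theorem image_starOf_preimage_subset {X Y : Type*} (f : Y → X) (A : Set Y) (U : Set (Set X)) :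
    f '' starOf A (preimage f '' U) ⊆ starOf (f '' A) U := by
  rintro _ ⟨y, ⟨_, ⟨⟨u, hu, rfl⟩, a, haA, hau⟩, hyu⟩, rfl⟩
  exact ⟨u, ⟨hu, f a, mem_image_of_mem f haA, hau⟩, hyu⟩

theorem StronglyStarScheepers.of_continuous_surjective {X Y : Type*} [TopologicalSpace X]
    [TopologicalSpace Y] {f : Y → X} (hf : Continuous f) (hsurj : Function.Surjective f)
    (hY : StronglyStarScheepers Y) : StronglyStarScheepers X := by
  intro U hU
  obtain ⟨F, hFfin, hF⟩ := hY (fun n => preimage f '' U n) fun n => (hU n).preimage hf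
  refine ⟨fun n => f '' F n, fun n => (hFfin n).image f, fun G hG => ?_⟩
  obtain ⟨n, hn⟩ := hF (Function.surjInv hsurj '' G) (hG.image _)
  refine ⟨n, fun x hx => image_starOf_preimage_subset f (F n) (U n) ?_⟩
  exact ⟨_, hn (mem_image_of_mem _ hx), Function.surjInv_eq hsurj x⟩

theorem continuous_fst_ADTop {X : Type*} [TopologicalSpace X] :
    @Continuous (X × Bool) X (ADTop X) _ Prod.fst := by
  let := ADTop X
  refine continuous_def.2 fun u hu => isOpen_iff_forall_mem_open.2 ?_
  rintro ⟨x, b⟩ hx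
  cases b
  · refine ⟨(u ×ˢ univ) \ {(x, true)}, fun p hp => hp.1.1, ?_, ?_⟩
    · exact TopologicalSpace.GenerateOpen.basic _ (Or.inr ⟨x, u, hu, hx, rfl⟩)
    · simpa using hx
  · refine ⟨{(x, true)}, ?_, ?_, rfl⟩
    · simpa using hx
    · exact TopologicalSpace.GenerateOpen.basic _ (Or.inl ⟨x, rfl⟩)

theorem stmt_14 {X : Type*} [TopologicalSpace X]
    (h : @StronglyStarScheepers (X × Bool) (ADTop X)) :
    StronglyStarScheepers X :=
  @StronglyStarScheepers.of_continuous_surjective X (X × Bool) _ (ADTop X) Prod.fst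
    continuous_fst_ADTop Prod.fst_surjective h
end
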